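/- arXiv:1503.00886 — 9 statements merged into one kernel-verified Lean document; each statement's English description precedes it below -/
import Mathlib

section
/- Positive maps are closed under Int(Rel) composition: if R is a positive map from (A⁺ with multipoint mp(A⁺), A⁻ with mp(A⁻)) to (B⁺ with mp(B⁺), B⁻ with mp(B⁻)) and S is a positive map from (B⁺ with mp(B⁺), B⁻ with mp(B⁻)) to (C⁺ with mp(C⁺), C⁻ with mp(C⁻)), then the Int(Rel) composite S∘R is a positive map from (A⁺ with mp(A⁺), A⁻ with mp(A⁻)) to (C⁺ with mp(C⁺), C⁻ with mp(C⁻)). -/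
namespace IntRel

/-- A relation from `α` to `β`. -/
abbrev Rel' (α β : Type) : Type := α → β → Prop

/-- Right-to-left composition of relations: `(rcomp S R) a c` iff `∃ b, R a b ∧ S b c`. -/
def rcomp {α β γ : Type} (S : Rel' β γ) (R : Rel' α β) : Rel' α γ :=
  fun a c => ∃ b, R a b ∧ S b c

/-- Reflexive–transitive closure of an endorelation. -/
def rstar {α : Type} (h : Rel' α α) : Rel' α α := Relation.ReflTransGen h

/-- Image `R[X]` of a subset under a relation. -/
def img {α β : Type} (R : Rel' α β) (X : Set α) : Set β := {b | ∃ a ∈ X, R a b}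

/-- Preimage `[Y]R` of a subset under a relation. -/
def pre {α β : Type} (R : Rel' α β) (Y : Set β) : Set α := {a | ∃ b ∈ Y, R a b}

/-- Identity relation. -/
def idRel (α : Type) : Rel' α α := fun a b => a = b

/-- Empty relation. -/
def emptyRel (α β : Type) : Rel' α β := fun _ _ => False

/-- Disjoint union of relations, acting componentwise. -/
def sumRel {α β γ δ : Type} (f : Rel' α γ) (g : Rel' β δ) : Rel' (α ⊕ β) (γ ⊕ δ) :=
  fun x y =>
    match x, y with
    | .inl a, .inl c => f a c
    | .inr b, .inr d => g b d
    | _, _ => False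

/-- Disjoint union of subsets. -/
def sumSet {α β : Type} (X : Set α) (Y : Set β) : Set (α ⊕ β) :=
  fun z => match z with
    | .inl a => a ∈ X
    | .inr b => b ∈ Y

variable {Ap Am Bp Bm Cp Cm Dp Dm : Type}

/-- Component `R₁₂ : A⁺ → B⁺` of an Int(Rel) morphism. -/
def c12 (R : Rel' (Ap ⊕ Bm) (Bp ⊕ Am)) : Rel' Ap Bp := fun a b => R (.inl a) (.inl b)
/-- Component `R₁₁ : A⁺ → A⁻` of an Int(Rel) morphism. -/
def c11 (R : Rel' (Ap ⊕ Bm) (Bp ⊕ Am)) : Rel' Ap Am := fun a a' => R (.inl a) (.inr a')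
/-- Component `R₂₂ : B⁻ → B⁺` of an Int(Rel) morphism. -/
def c22 (R : Rel' (Ap ⊕ Bm) (Bp ⊕ Am)) : Rel' Bm Bp := fun b' b => R (.inr b') (.inl b)
/-- Component `R₂₁ : B⁻ → A⁻` of an Int(Rel) morphism. -/
def c21 (R : Rel' (Ap ⊕ Bm) (Bp ⊕ Am)) : Rel' Bm Am := fun b' a' => R (.inr b') (.inr a')

/-- Composition in Int(Rel), given by the star (execution) formula. -/
def IntComp (S : Rel' (Bp ⊕ Cm) (Cp ⊕ Bm)) (R : Rel' (Ap ⊕ Bm) (Bp ⊕ Am)) :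
    Rel' (Ap ⊕ Cm) (Cp ⊕ Am) :=
  fun x y =>
    match x, y with
    | .inl a, .inl c =>
        rcomp (c12 S) (rcomp (rstar (rcomp (c22 R) (c11 S))) (c12 R)) a c
    | .inl a, .inr a' =>
        c11 R a a' ∨
          rcomp (c21 R) (rcomp (c11 S) (rcomp (rstar (rcomp (c22 R) (c11 S))) (c12 R))) a a'
    | .inr c', .inl c =>
        c22 S c' c ∨
          rcomp (c12 S) (rcomp (c22 R) (rcomp (rstar (rcomp (c11 S) (c22 R))) (c21 S))) c' c
    | .inr c', .inr a' =>
        rcomp (c21 R) (rcomp (rstar (rcomp (c11 S) (c22 R))) (c21 S)) c' a'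

/-- The identity Int(Rel) morphism on `(A⁺, A⁻)`. -/
def IdInt (Ap Am : Type) : Rel' (Ap ⊕ Am) (Ap ⊕ Am) :=
  fun x y =>
    match x, y with
    | .inl a, .inl a2 => a = a2
    | .inr a', .inr a2 => a' = a2
    | _, _ => False

/-- `R` is a positive map between the indicated multipointed objects. -/
def IsPos (R : Rel' (Ap ⊕ Bm) (Bp ⊕ Am)) (mAp : Set Ap) (mAm : Set Am)
    (mBp : Set Bp) (mBm : Set Bm) : Prop :=
  pre (c12 R) mBp = mAp ∧ img (c21 R) mBm = mAm ∧
    pre (c22 R) mBp = ∅ ∧ img (c22 R) mBm = ∅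

/-- `R` is a negative map between the indicated multipointed objects. -/
def IsNeg (R : Rel' (Ap ⊕ Bm) (Bp ⊕ Am)) (mAp : Set Ap) (mAm : Set Am)
    (mBp : Set Bp) (mBm : Set Bm) : Prop :=
  img (c12 R) mAp = mBp ∧ pre (c21 R) mAm = mBm ∧
    pre (c11 R) mAm = ∅ ∧ img (c11 R) mAp = ∅


/-- Positive maps are closed under Int(Rel) composition. -/
theorem pos_comp (Ap Am Bp Bm Cp Cm : Type)
    (mAp : Set Ap) (mAm : Set Am) (mBp : Set Bp) (mBm : Set Bm)
    (mCp : Set Cp) (mCm : Set Cm)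
    (R : Rel' (Ap ⊕ Bm) (Bp ⊕ Am)) (S : Rel' (Bp ⊕ Cm) (Cp ⊕ Bm))
    (hR : IsPos R mAp mAm mBp mBm) (hS : IsPos S mBp mBm mCp mCm) :
    IsPos (IntComp S R) mAp mAm mCp mCm := by
  obtain ⟨hR12, hR21, hR22p, hR22i⟩ := hR
  obtain ⟨hS12, hS21, hS22p, hS22i⟩ := hS
  -- no step of (R22∘S11)* can end in mBp
  have noStepEnd : ∀ x b, b ∈ mBp → ¬ rcomp (c22 R) (c11 S) x b := by
    intro x b hb ⟨w, _, hw2⟩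
    have hw : w ∈ pre (c22 R) mBp := ⟨b, hb, hw2⟩
    rw [hR22p] at hw; exact hw
  have starEnd : ∀ b0 b, b ∈ mBp →
      Relation.ReflTransGen (rcomp (c22 R) (c11 S)) b0 b → b0 = b := by
    intro b0 b hb h
    rcases Relation.ReflTransGen.cases_tail h with h | ⟨c, _, hstep⟩
    · exact h.symm
    · exact absurd hstep (noStepEnd c b hb)
  -- no step of (S11∘R22)* can start in mBm
  have noStepStart : ∀ y z, y ∈ mBm → ¬ rcomp (c11 S) (c22 R) y z := by
    intro y z hy ⟨w, hw1, _⟩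
    have hw : w ∈ img (c22 R) mBm := ⟨y, hy, hw1⟩
    rw [hR22i] at hw; exact hw
  have starStart : ∀ y x, y ∈ mBm →
      Relation.ReflTransGen (rcomp (c11 S) (c22 R)) y x → y = x := by
    intro y x hy h
    rcases Relation.ReflTransGen.cases_head h with h | ⟨c, hstep, _⟩
    · exact h
    · exact absurd hstep (noStepStart y c hy)
  refine ⟨?_, ?_, ?_, ?_⟩
  · -- pre (c12 (IntComp S R)) mCp = mAp
    ext a
    constructor
    · rintro ⟨c, hc, b, ⟨b0, hR12a, hstar⟩, hS12b⟩
      have hb : b ∈ mBp := by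
        rw [← hS12]; exact ⟨c, hc, hS12b⟩
      have hb0 : b0 = b := starEnd b0 b hb hstar
      rw [← hR12]; exact ⟨b, hb, hb0 ▸ hR12a⟩
    · intro ha
      rw [← hR12] at ha
      obtain ⟨b, hb, hRab⟩ := ha
      have hb' := hb; rw [← hS12] at hb'
      obtain ⟨c, hc, hSbc⟩ := hb'
      exact ⟨c, hc, b, ⟨b, hRab, Relation.ReflTransGen.refl⟩, hSbc⟩
  · -- img (c21 (IntComp S R)) mCm = mAm
    ext a'
    constructor
    · rintro ⟨c', hc', x, ⟨y, hS21c, hstar⟩, hR21x⟩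
      have hy : y ∈ mBm := by
        rw [← hS21]; exact ⟨c', hc', hS21c⟩
      have hyx : y = x := starStart y x hy hstar
      rw [← hR21]; exact ⟨x, hyx ▸ hy, hR21x⟩
    · intro ha
      rw [← hR21] at ha
      obtain ⟨b', hb', hRb⟩ := ha
      have hb'' := hb'; rw [← hS21] at hb''
      obtain ⟨c', hc', hSc⟩ := hb''
      exact ⟨c', hc', b', ⟨b', hSc, Relation.ReflTransGen.refl⟩, hRb⟩
  · -- pre (c22 (IntComp S R)) mCp = ∅
    rw [Set.eq_empty_iff_forall_notMem]
    rintro c' ⟨c, hc, h | ⟨b, ⟨x, ⟨y, hS21c, hstar⟩, hR22x⟩, hS12b⟩⟩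
    · have : c' ∈ pre (c22 S) mCp := ⟨c, hc, h⟩
      rw [hS22p] at this; exact this
    · have hb : b ∈ mBp := by rw [← hS12]; exact ⟨c, hc, hS12b⟩
      have : x ∈ pre (c22 R) mBp := ⟨b, hb, hR22x⟩
      rw [hR22p] at this; exact this
  · -- img (c22 (IntComp S R)) mCm = ∅
    rw [Set.eq_empty_iff_forall_notMem]
    rintro c ⟨c', hc', h | ⟨b, ⟨x, ⟨y, hS21c, hstar⟩, hR22x⟩, hS12b⟩⟩
    · have : c ∈ img (c22 S) mCm := ⟨c', hc', h⟩
      rw [hS22i] at this; exact this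
    · have hy : y ∈ mBm := by rw [← hS21]; exact ⟨c', hc', hS21c⟩
      have hyx : y = x := starStart y x hy hstar
      have : b ∈ img (c22 R) mBm := ⟨x, hyx ▸ hy, hR22x⟩
      rw [hR22i] at this; exact this

end IntRel
end

section
/- Positivity is preserved by tensor: if R is a positive map from (A⁺ with mp(A⁺), A⁻ with mp(A⁻)) to (B⁺ with mp(B⁺), B⁻ with mp(B⁻)) and S is a positive map from (C⁺ with mp(C⁺), C⁻ with mp(C⁻)) to (D⁺ with mp(D⁺), D⁻ with mp(D⁻)), then the tensor product R⊗S — the Int(Rel) morphism with components (R⊗S)₁₂ = R₁₂⊕S₁₂ : A⁺⊕C⁺ → B⁺⊕D⁺, (R⊗S)₂₁ = R₂₁⊕S₂₁ : B⁻⊕D⁻ → A⁻⊕C⁻, (R⊗S)₁₁ = R₁₁⊕S₁₁, (R⊗S)₂₂ = R₂₂⊕S₂₂, with all mixed blocks empty — is a positive map from ((A⁺⊕C⁺) with multipoint mp(A⁺)⊕mp(C⁺), (A⁻⊕C⁻) with mp(A⁻)⊕mp(C⁻)) to ((B⁺⊕D⁺) with mp(B⁺)⊕mp(D⁺), (B⁻⊕D⁻)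 with mp(B⁻)⊕mp(D⁻)). -/
namespace IntRel

variable {Ap Am Bp Bm Cp Cm Dp Dm : Type}

/-- Tensor product of Int(Rel) morphisms: block-diagonal on all components,
with all mixed blocks empty. -/
def tensorM (R : Rel' (Ap ⊕ Bm) (Bp ⊕ Am)) (S : Rel' (Cp ⊕ Dm) (Dp ⊕ Cm)) :
    Rel' ((Ap ⊕ Cp) ⊕ (Bm ⊕ Dm)) ((Bp ⊕ Dp) ⊕ (Am ⊕ Cm)) :=
  fun x y =>
    match x, y with
    | .inl u, .inl v => sumRel (c12 R) (c12 S) u v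
    | .inl u, .inr v => sumRel (c11 R) (c11 S) u v
    | .inr u, .inl v => sumRel (c22 R) (c22 S) u v
    | .inr u, .inr v => sumRel (c21 R) (c21 S) u v


lemma pre_sumRel {α β γ δ : Type} (f : Rel' α γ) (g : Rel' β δ) (X : Set γ) (Y : Set δ) :
    pre (sumRel f g) (sumSet X Y) = sumSet (pre f X) (pre g Y) := by
  ext z
  cases z with
  | inl a =>
    constructor
    · rintro ⟨w, hw, hr⟩; cases w with
      | inl c => exact ⟨c, hw, hr⟩
      | inr d => exact hr.elim
    · rintro ⟨c, hc, hr⟩; exact ⟨.inl c, hc, hr⟩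
  | inr b =>
    constructor
    · rintro ⟨w, hw, hr⟩; cases w with
      | inl c => exact hr.elim
      | inr d => exact ⟨d, hw, hr⟩
    · rintro ⟨d, hd, hr⟩; exact ⟨.inr d, hd, hr⟩

lemma img_sumRel {α β γ δ : Type} (f : Rel' α γ) (g : Rel' β δ) (X : Set α) (Y : Set β) :
    img (sumRel f g) (sumSet X Y) = sumSet (img f X) (img g Y) := by
  ext z
  cases z with
  | inl c =>
    constructor
    · rintro ⟨w, hw, hr⟩; cases w with
      | inl a => exact ⟨a, hw, hr⟩
      | inr b => exact hr.elim
    · rintro ⟨a, ha, hr⟩; exact ⟨.inl a, ha, hr⟩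
  | inr d =>
    constructor
    · rintro ⟨w, hw, hr⟩; cases w with
      | inl a => exact hr.elim
      | inr b => exact ⟨b, hw, hr⟩
    · rintro ⟨b, hb, hr⟩; exact ⟨.inr b, hb, hr⟩

lemma sumSet_empty {α β : Type} : sumSet (∅ : Set α) (∅ : Set β) = ∅ := by
  ext z; cases z <;> exact Iff.rfl

lemma c12_tensor (R : Rel' (Ap ⊕ Bm) (Bp ⊕ Am)) (S : Rel' (Cp ⊕ Dm) (Dp ⊕ Cm)) :
    c12 (tensorM R S) = sumRel (c12 R) (c12 S) := rfl
lemma c21_tensor (R : Rel' (Ap ⊕ Bm) (Bp ⊕ Am)) (S : Rel' (Cp ⊕ Dm) (Dp ⊕ Cm)) :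
    c21 (tensorM R S) = sumRel (c21 R) (c21 S) := rfl
lemma c22_tensor (R : Rel' (Ap ⊕ Bm) (Bp ⊕ Am)) (S : Rel' (Cp ⊕ Dm) (Dp ⊕ Cm)) :
    c22 (tensorM R S) = sumRel (c22 R) (c22 S) := rfl

/-- Positivity is preserved by tensor. -/
theorem pos_tensor (Ap Am Bp Bm Cp Cm Dp Dm : Type)
    (mAp : Set Ap) (mAm : Set Am) (mBp : Set Bp) (mBm : Set Bm)
    (mCp : Set Cp) (mCm : Set Cm) (mDp : Set Dp) (mDm : Set Dm)
    (R : Rel' (Ap ⊕ Bm) (Bp ⊕ Am)) (S : Rel' (Cp ⊕ Dm) (Dp ⊕ Cm))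
    (hR : IsPos R mAp mAm mBp mBm) (hS : IsPos S mCp mCm mDp mDm) :
    IsPos (tensorM R S) (sumSet mAp mCp) (sumSet mAm mCm)
      (sumSet mBp mDp) (sumSet mBm mDm) := by
  obtain ⟨h1, h2, h3, h4⟩ := hR
  obtain ⟨g1, g2, g3, g4⟩ := hS
  refine ⟨?_, ?_, ?_, ?_⟩
  · rw [c12_tensor, pre_sumRel, h1, g1]
  · rw [c21_tensor, img_sumRel, h2, g2]
  · rw [c22_tensor, pre_sumRel, h3, g3, sumSet_empty]
  · rw [c22_tensor, img_sumRel, h4, g4, sumSet_empty]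


end IntRel
end

section
/- Negative maps are closed under Int(Rel) composition: if R is a negative map from (A⁺ with multipoint mp(A⁺), A⁻ with mp(A⁻)) to (B⁺ with mp(B⁺), B⁻ with mp(B⁻)) and S is a negative map from (B⁺ with mp(B⁺), B⁻ with mp(B⁻)) to (C⁺ with mp(C⁺), C⁻ with mp(C⁻)), then the Int(Rel) composite S∘R is a negative map from (A⁺ with mp(A⁺), A⁻ with mp(A⁻)) to (C⁺ with mp(C⁺), C⁻ with mp(C⁻)). -/
namespace IntRel

variable {Ap Am Bp Bm Cp Cm Dp Dm : Type}

/-- Negative maps are closed under Int(Rel) composition. -/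
theorem neg_comp (Ap Am Bp Bm Cp Cm : Type)
    (mAp : Set Ap) (mAm : Set Am) (mBp : Set Bp) (mBm : Set Bm)
    (mCp : Set Cp) (mCm : Set Cm)
    (R : Rel' (Ap ⊕ Bm) (Bp ⊕ Am)) (S : Rel' (Bp ⊕ Cm) (Cp ⊕ Bm))
    (hR : IsNeg R mAp mAm mBp mBm) (hS : IsNeg S mBp mBm mCp mCm) :
    IsNeg (IntComp S R) mAp mAm mCp mCm := by
  obtain ⟨hR12, hR21, hR11p, hR11i⟩ := hR
  obtain ⟨hS12, hS21, hS11p, hS11i⟩ := hS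
  have hSp : ∀ b b', b ∈ mBp → ¬ c11 S b b' := by
    intro b b' hb h
    have : b' ∈ img (c11 S) mBp := ⟨b, hb, h⟩
    rw [hS11i] at this; exact this
  have hSm : ∀ b b', b' ∈ mBm → ¬ c11 S b b' := by
    intro b b' hb h
    have : b ∈ pre (c11 S) mBm := ⟨b', hb, h⟩
    rw [hS11p] at this; exact this
  have star_p : ∀ b b', rstar (rcomp (c22 R) (c11 S)) b b' → b ∈ mBp → b' = b := by
    intro b b' h hb
    rcases Relation.ReflTransGen.cases_head h with h1 | ⟨c, ⟨d, hd, _⟩, _⟩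
    · exact h1.symm
    · exact absurd hd (hSp b d hb)
  have star_m : ∀ b b', rstar (rcomp (c11 S) (c22 R)) b b' → b' ∈ mBm → b = b' := by
    intro b b' h hb
    rcases Relation.ReflTransGen.cases_tail h with h1 | ⟨c, _, ⟨d, _, hd⟩⟩
    · exact h1.symm
    · exact absurd hd (hSm d b' hb)
  refine ⟨?_, ?_, ?_, ?_⟩
  · -- img (c12 (IntComp S R)) mAp = mCp
    ext c; constructor
    · rintro ⟨a, ha, b2, ⟨b1, hab1, hstar⟩, hS⟩
      have hb1 : b1 ∈ mBp := by rw [← hR12]; exact ⟨a, ha, hab1⟩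
      have heq : b2 = b1 := star_p b1 b2 hstar hb1
      rw [heq] at hS
      rw [← hS12]; exact ⟨b1, hb1, hS⟩
    · intro hc
      rw [← hS12] at hc
      obtain ⟨b, hb, hSbc⟩ := hc
      rw [← hR12] at hb
      obtain ⟨a, ha, hab⟩ := hb
      exact ⟨a, ha, b, ⟨b, hab, Relation.ReflTransGen.refl⟩, hSbc⟩
  · -- pre (c21 (IntComp S R)) mAm = mCm
    ext c'; constructor
    · rintro ⟨a', ha', b', ⟨b0, hS21b, hstar⟩, hR21b⟩
      have hb' : b' ∈ mBm := by rw [← hR21]; exact ⟨a', ha', hR21b⟩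
      have heq : b0 = b' := star_m b0 b' hstar hb'
      rw [heq] at hS21b
      rw [← hS21]; exact ⟨b', hb', hS21b⟩
    · intro hc
      rw [← hS21] at hc
      obtain ⟨b, hb, hSb⟩ := hc
      rw [← hR21] at hb
      obtain ⟨a', ha', hRb⟩ := hb
      exact ⟨a', ha', b, ⟨b, hSb, Relation.ReflTransGen.refl⟩, hRb⟩
  · -- pre (c11 (IntComp S R)) mAm = ∅
    ext a
    simp only [Set.mem_empty_iff_false, iff_false]
    rintro ⟨a', ha', h | ⟨b', ⟨b, _, hSbb'⟩, hR21b⟩⟩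
    · have : a ∈ pre (c11 R) mAm := ⟨a', ha', h⟩
      rw [hR11p] at this; exact this
    · have hb' : b' ∈ mBm := by rw [← hR21]; exact ⟨a', ha', hR21b⟩
      exact hSm b b' hb' hSbb'
  · -- img (c11 (IntComp S R)) mAp = ∅
    ext a'
    simp only [Set.mem_empty_iff_false, iff_false]
    rintro ⟨a, ha, h | ⟨b', ⟨b, ⟨b0, hab0, hstar⟩, hSbb'⟩, _⟩⟩
    · have : a' ∈ img (c11 R) mAp := ⟨a, ha, h⟩
      rw [hR11i] at this; exact this
    · have hb0 : b0 ∈ mBp := by rw [← hR12]; exact ⟨a, ha, hab0⟩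
      have heq : b = b0 := star_p b0 b hstar hb0
      rw [heq] at hSbb'
      exact hSp b0 b' hb0 hSbb'

end IntRel
end

section
/- Adjunction bijection for ↓ (positive side): for any sets A⁺, A⁻ with multipoints mp(A⁺) ⊆ A⁺, mp(A⁻) ⊆ A⁻, and any sets B⁺, B⁻, the assignment sending a relation R : A⁺⊕B⁻ → B⁺⊕A⁻ to the relation R' : A⁺⊕(B⁻⊕1) → (B⁺⊕1)⊕A⁻ determined by: R'₁₂(a, b) iff R₁₂(a,b) for b ∈ B⁺, R'₁₂(a, ⋆) iff a ∈ mp(A⁺); R'₂₁(b', a') iff R₂₁(b',a') for b' ∈ B⁻, R'₂₁(⋆, a') iff a' ∈ mp(A⁻); R'₁₁ = R₁₁; and R'₂₂ = R₂₂ embedded with no pairs involving ⋆, is a bijection from the set of all relations A⁺⊕B⁻ → B⁺⊕A⁻ onto the set of positive maps from (A⁺ with mp(A⁺), A⁻ with mp(A⁻)) to ((B⁺⊕1) with multipoint {⋆}, (B⁻⊕1) with multipoint {⋆}). -/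
namespace IntRel

variable {Ap Am Bp Bm Cp Cm Dp Dm : Type}

/-- The multipoint `{⋆}` on `α ⊕ 1`. -/
def starSet (α : Type) : Set (α ⊕ Unit) := {z | z = Sum.inr ()}

/-- The adjunction assignment (positive side): sends `R : A⁺⊕B⁻ → B⁺⊕A⁻` to
`R' : A⁺⊕(B⁻⊕1) → (B⁺⊕1)⊕A⁻` with `R'₁₂(a,⋆) iff a ∈ mp(A⁺)`,
`R'₂₁(⋆,a') iff a' ∈ mp(A⁻)`, `R'₁₁ = R₁₁`, `R'₂₂ = R₂₂` embedded with no `⋆` pairs. -/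
def lower (mAp : Set Ap) (mAm : Set Am) (R : Rel' (Ap ⊕ Bm) (Bp ⊕ Am)) :
    Rel' (Ap ⊕ (Bm ⊕ Unit)) ((Bp ⊕ Unit) ⊕ Am) :=
  fun x y =>
    match x, y with
    | .inl a, .inl (.inl b) => R (.inl a) (.inl b)
    | .inl a, .inl (.inr _) => a ∈ mAp
    | .inl a, .inr a' => R (.inl a) (.inr a')
    | .inr (.inl b'), .inl (.inl b) => R (.inr b') (.inl b)
    | .inr (.inl b'), .inr a' => R (.inr b') (.inr a')
    | .inr (.inr _), .inr a' => a' ∈ mAm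
    | _, _ => False

/-- Adjunction bijection for `↓` (positive side): `lower` is a bijection from the set of
all relations `A⁺⊕B⁻ → B⁺⊕A⁻` onto the set of positive maps from
`(A⁺,mp(A⁺);A⁻,mp(A⁻))` to `(B⁺⊕1,{⋆};B⁻⊕1,{⋆})`. -/
theorem lower_bijection (Ap Am Bp Bm : Type) (mAp : Set Ap) (mAm : Set Am) :
    (∀ R : Rel' (Ap ⊕ Bm) (Bp ⊕ Am),
        IsPos (lower mAp mAm R) mAp mAm (starSet Bp) (starSet Bm)) ∧
    Function.Injective (lower (Bp := Bp) (Bm := Bm) mAp mAm) ∧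
    (∀ R' : Rel' (Ap ⊕ (Bm ⊕ Unit)) ((Bp ⊕ Unit) ⊕ Am),
        IsPos R' mAp mAm (starSet Bp) (starSet Bm) →
          ∃ R : Rel' (Ap ⊕ Bm) (Bp ⊕ Am), lower mAp mAm R = R') := by
  refine ⟨?_, ?_, ?_⟩
  · intro R
    refine ⟨?_, ?_, ?_, ?_⟩
    · ext a
      simp only [pre, starSet, Set.mem_setOf_eq]
      constructor
      · rintro ⟨b, rfl, h⟩; exact h
      · intro h; exact ⟨Sum.inr (), rfl, h⟩
    · ext a'
      simp only [img, starSet, Set.mem_setOf_eq]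
      constructor
      · rintro ⟨b', rfl, h⟩; exact h
      · intro h; exact ⟨Sum.inr (), rfl, h⟩
    · ext b'
      simp only [pre, starSet, Set.mem_setOf_eq, Set.mem_empty_iff_false, iff_false]
      rintro ⟨b, rfl, h⟩
      cases b' <;> exact h
    · ext b
      simp only [img, starSet, Set.mem_setOf_eq, Set.mem_empty_iff_false, iff_false]
      rintro ⟨b', rfl, h⟩
      exact h
  · intro R S h
    funext x y
    cases x with
    | inl a =>
      cases y with
      | inl b => exact congrFun (congrFun h (Sum.inl a)) (Sum.inl (Sum.inl b))
      | inr a' => exact congrFun (congrFun h (Sum.inl a)) (Sum.inr a')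
    | inr b' =>
      cases y with
      | inl b => exact congrFun (congrFun h (Sum.inr (Sum.inl b'))) (Sum.inl (Sum.inl b))
      | inr a' => exact congrFun (congrFun h (Sum.inr (Sum.inl b'))) (Sum.inr a')
  · rintro R' ⟨h1, h2, h3, h4⟩
    refine ⟨fun x y =>
      match x, y with
      | .inl a, .inl b => R' (.inl a) (.inl (.inl b))
      | .inl a, .inr a' => R' (.inl a) (.inr a')
      | .inr b', .inl b => R' (.inr (.inl b')) (.inl (.inl b))
      | .inr b', .inr a' => R' (.inr (.inl b')) (.inr a'), ?_⟩
    have h1' : ∀ a, a ∈ mAp ↔ R' (.inl a) (.inl (.inr ())) := by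
      intro a
      rw [← h1]
      simp only [pre, starSet, Set.mem_setOf_eq]
      constructor
      · rintro ⟨b, rfl, h⟩; exact h
      · intro h; exact ⟨Sum.inr (), rfl, h⟩
    have h2' : ∀ a', a' ∈ mAm ↔ R' (.inr (.inr ())) (.inr a') := by
      intro a'
      rw [← h2]
      simp only [img, starSet, Set.mem_setOf_eq]
      constructor
      · rintro ⟨b', rfl, h⟩; exact h
      · intro h; exact ⟨Sum.inr (), rfl, h⟩
    have h3' : ∀ b', ¬ R' (.inr b') (.inl (.inr ())) := by
      intro b' h
      have : b' ∈ pre (c22 R') (starSet Bp) := ⟨Sum.inr (), rfl, h⟩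
      rw [h3] at this; exact this
    have h4' : ∀ b, ¬ R' (.inr (.inr ())) (.inl b) := by
      intro b h
      have : b ∈ img (c22 R') (starSet Bm) := ⟨Sum.inr (), rfl, h⟩
      rw [h4] at this; exact this
    funext x y
    cases x with
    | inl a =>
      cases y with
      | inl b =>
        cases b with
        | inl b => rfl
        | inr u => exact propext (h1' a)
      | inr a' => rfl
    | inr b' =>
      cases b' with
      | inl b' =>
        cases y with
        | inl b =>
          cases b with
          | inl b => rfl
          | inr u => exact propext (iff_of_false id (h3' (Sum.inl b')))
        | inr a' => rfl
      | inr u =>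
        cases y with
        | inl b => exact propext (iff_of_false id (h4' b))
        | inr a' => exact propext (h2' a')

end IntRel
end

section
/- Adjunction bijection for ↑ (negative side): for any sets B⁺, B⁻ with multipoints mp(B⁺) ⊆ B⁺, mp(B⁻) ⊆ B⁻, and any sets A⁺, A⁻, the assignment sending a relation R : A⁺⊕B⁻ → B⁺⊕A⁻ to the relation R' : (A⁺⊕1)⊕B⁻ → B⁺⊕(A⁻⊕1) determined by: R'₁₂(a, b) iff R₁₂(a,b) for a ∈ A⁺, R'₁₂(⋆, b) iff b ∈ mp(B⁺); R'₂₁(b', a') iff R₂₁(b',a') for a' ∈ A⁻, R'₂₁(b', ⋆) iff b' ∈ mp(B⁻); R'₂₂ = R₂₂; and R'₁₁ = R₁₁ embedded with no pairs involving ⋆, is a bijection from the set of all relations A⁺⊕B⁻ → B⁺⊕A⁻ onto the set of negative maps from ((A⁺⊕1) with multipoint {⋆}, (A⁻⊕1) with multipoint {⋆}) to (B⁺ with mp(B⁺), B⁻ with mp(B⁻)). -/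
namespace IntRel

variable {Ap Am Bp Bm Cp Cm Dp Dm : Type}

/-- The adjunction assignment (negative side): sends `R : A⁺⊕B⁻ → B⁺⊕A⁻` to
`R' : (A⁺⊕1)⊕B⁻ → B⁺⊕(A⁻⊕1)` with `R'₁₂(⋆,b) iff b ∈ mp(B⁺)`,
`R'₂₁(b',⋆) iff b' ∈ mp(B⁻)`, `R'₂₂ = R₂₂`, `R'₁₁ = R₁₁` embedded with no `⋆` pairs. -/
def upL (mBp : Set Bp) (mBm : Set Bm) (R : Rel' (Ap ⊕ Bm) (Bp ⊕ Am)) :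
    Rel' ((Ap ⊕ Unit) ⊕ Bm) (Bp ⊕ (Am ⊕ Unit)) :=
  fun x y =>
    match x, y with
    | .inl (.inl a), .inl b => R (.inl a) (.inl b)
    | .inl (.inr _), .inl b => b ∈ mBp
    | .inl (.inl a), .inr (.inl a') => R (.inl a) (.inr a')
    | .inr b', .inl b => R (.inr b') (.inl b)
    | .inr b', .inr (.inl a') => R (.inr b') (.inr a')
    | .inr b', .inr (.inr _) => b' ∈ mBm
    | _, _ => False

/-- Adjunction bijection for `↑` (negative side): `upL` is a bijection from the set of
all relations `A⁺⊕B⁻ → B⁺⊕A⁻` onto the set of negative maps from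
`(A⁺⊕1,{⋆};A⁻⊕1,{⋆})` to `(B⁺,mp(B⁺);B⁻,mp(B⁻))`. -/
theorem upL_bijection (Ap Am Bp Bm : Type) (mBp : Set Bp) (mBm : Set Bm) :
    (∀ R : Rel' (Ap ⊕ Bm) (Bp ⊕ Am),
        IsNeg (upL mBp mBm R) (starSet Ap) (starSet Am) mBp mBm) ∧
    Function.Injective (upL (Ap := Ap) (Am := Am) mBp mBm) ∧
    (∀ R' : Rel' ((Ap ⊕ Unit) ⊕ Bm) (Bp ⊕ (Am ⊕ Unit)),
        IsNeg R' (starSet Ap) (starSet Am) mBp mBm →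
          ∃ R : Rel' (Ap ⊕ Bm) (Bp ⊕ Am), upL mBp mBm R = R') := by
  refine ⟨?_, ?_, ?_⟩
  · intro R
    refine ⟨?_, ?_, ?_, ?_⟩
    · ext b
      constructor
      · rintro ⟨a, ha, hab⟩
        cases a with
        | inl a => exact absurd ha (by simp [starSet])
        | inr u => exact hab
      · intro hb; exact ⟨.inr (), rfl, hb⟩
    · ext b'
      constructor
      · rintro ⟨a', ha', hab⟩
        cases a' with
        | inl a' => exact absurd ha' (by simp [starSet])
        | inr u => exact hab
      · intro hb'; exact ⟨.inr (), rfl, hb'⟩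
    · ext x
      simp only [Set.mem_empty_iff_false, iff_false]
      rintro ⟨a', ha', hab⟩
      cases a' with
      | inl a' => exact absurd ha' (by simp [starSet])
      | inr u => cases x <;> exact hab
    · ext a'
      simp only [Set.mem_empty_iff_false, iff_false]
      rintro ⟨a, ha, hab⟩
      cases a with
      | inl a => exact absurd ha (by simp [starSet])
      | inr u => cases a' <;> exact hab
  · intro R S h
    funext x y
    have hc : ∀ u v, upL mBp mBm R u v = upL mBp mBm S u v := fun u v => by rw [h]
    cases x with
    | inl a =>
      cases y with
      | inl b => exact hc (.inl (.inl a)) (.inl b)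
      | inr a' => exact hc (.inl (.inl a)) (.inr (.inl a'))
    | inr b' =>
      cases y with
      | inl b => exact hc (.inr b') (.inl b)
      | inr a' => exact hc (.inr b') (.inr (.inl a'))
  · intro R' ⟨h12, h21, h11p, h11i⟩
    refine ⟨fun x y =>
      match x, y with
      | .inl a, .inl b => R' (.inl (.inl a)) (.inl b)
      | .inl a, .inr a' => R' (.inl (.inl a)) (.inr (.inl a'))
      | .inr b', .inl b => R' (.inr b') (.inl b)
      | .inr b', .inr a' => R' (.inr b') (.inr (.inl a')), ?_⟩
    have hBp : ∀ b, (b ∈ mBp ↔ R' (.inl (.inr ())) (.inl b)) := by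
      intro b
      rw [← h12]
      constructor
      · rintro ⟨a, ha, hab⟩
        cases a with
        | inl a => exact absurd ha (by simp [starSet])
        | inr u => exact hab
      · intro hb; exact ⟨.inr (), rfl, hb⟩
    have hBm : ∀ b', (b' ∈ mBm ↔ R' (.inr b') (.inr (.inr ()))) := by
      intro b'
      rw [← h21]
      constructor
      · rintro ⟨a', ha', hab⟩
        cases a' with
        | inl a' => exact absurd ha' (by simp [starSet])
        | inr u => exact hab
      · intro hb'; exact ⟨.inr (), rfl, hb'⟩
    have hE1 : ∀ x (a' : Unit), ¬ R' (.inl x) (.inr (.inr a')) := by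
      intro x a' hx
      have : x ∈ pre (c11 R') (starSet Am) := ⟨.inr a', rfl, hx⟩
      rw [h11p] at this; exact this
    have hE2 : ∀ (u : Unit) y, ¬ R' (.inl (.inr u)) (.inr y) := by
      intro u y hx
      have : y ∈ img (c11 R') (starSet Ap) := ⟨.inr u, rfl, hx⟩
      rw [h11i] at this; exact this
    funext x y
    cases x with
    | inl au =>
      cases au with
      | inl a =>
        cases y with
        | inl b => rfl
        | inr a' =>
          cases a' with
          | inl a' => rfl
          | inr u =>
            exact propext (iff_of_false id (hE1 (.inl a) u))
      | inr u =>
        cases y with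
        | inl b => exact propext (hBp b)
        | inr a' => exact propext (iff_of_false (fun h => (by cases a' <;> exact h : False)) (hE2 u a'))
    | inr b' =>
      cases y with
      | inl b => rfl
      | inr a' =>
        cases a' with
        | inl a' => rfl
        | inr u => exact propext (hBm b')

end IntRel
end

section
/- Composition in Int(Rel) via the trace equals the star formula: let R : A⁺⊕B⁻ → B⁺⊕A⁻ and S : B⁺⊕C⁻ → C⁺⊕B⁻ be relations, and let K : (A⁺⊕C⁻)⊕B⁻ → (C⁺⊕A⁻)⊕B⁻ be the relation whose blocks are: A⁺→C⁺ given by S₁₂∘R₁₂; A⁺→A⁻ given by R₁₁; A⁺→B⁻ given by S₁₁∘R₁₂; C⁻→C⁺ given by S₂₂; C⁻→A⁻ empty; C⁻→B⁻ given by S₂₁; B⁻→C⁺ given by S₁₂∘R₂₂; B⁻→A⁻ given by R₂₁; B⁻→B⁻ given by S₁₁∘R₂₂ (K is the morphism whose trace over B⁻ defines composition in the Int construction on Rel). Then the particle-style trace Tr over B⁻ of K is the relation A⁺⊕C⁻ → C⁺⊕A⁻ whose components are: A⁺→C⁺ equal to S₁₂∘(R₂₂∘S₁₁)*∘R₁₂;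 A⁺→A⁻ equal to R₁₁ ∪ R₂₁∘S₁₁∘(R₂₂∘S₁₁)*∘R₁₂; C⁻→C⁺ equal to S₂₂ ∪ S₁₂∘R₂₂∘(S₁₁∘R₂₂)*∘S₂₁; and C⁻→A⁻ equal to R₂₁∘(S₁₁∘R₂₂)*∘S₂₁. -/
namespace IntRel

variable {Ap Am Bp Bm Cp Cm Dp Dm : Type}

/-- The particle-style trace over `U` of a relation `f : X⊕U → Y⊕U`:
`Tr(f) = f_XY ∪ f_UY ∘ (f_UU)* ∘ f_XU`. -/
def ptrace {X U Y : Type} (f : Rel' (X ⊕ U) (Y ⊕ U)) : Rel' X Y :=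
  fun x y =>
    f (.inl x) (.inl y) ∨
      ∃ u u', f (.inl x) (.inr u) ∧
        Relation.ReflTransGen (fun a b => f (.inr a) (.inr b)) u u' ∧
        f (.inr u') (.inl y)

/-- The morphism `K : (A⁺⊕C⁻)⊕B⁻ → (C⁺⊕A⁻)⊕B⁻` whose trace over `B⁻` defines
composition in the Int construction on Rel. -/
def Kmor (R : Rel' (Ap ⊕ Bm) (Bp ⊕ Am)) (S : Rel' (Bp ⊕ Cm) (Cp ⊕ Bm)) :
    Rel' ((Ap ⊕ Cm) ⊕ Bm) ((Cp ⊕ Am) ⊕ Bm) :=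
  fun x y =>
    match x, y with
    | .inl (.inl a), .inl (.inl c) => rcomp (c12 S) (c12 R) a c
    | .inl (.inl a), .inl (.inr a') => c11 R a a'
    | .inl (.inl a), .inr b' => rcomp (c11 S) (c12 R) a b'
    | .inl (.inr c'), .inl (.inl c) => c22 S c' c
    | .inl (.inr _), .inl (.inr _) => False
    | .inl (.inr c'), .inr b' => c21 S c' b'
    | .inr b', .inl (.inl c) => rcomp (c12 S) (c22 R) b' c
    | .inr b', .inl (.inr a') => c21 R b' a'
    | .inr b', .inr b2 => rcomp (c11 S) (c22 R) b' b2

lemma star_glue {α β : Type} (f : Rel' α β) (g : Rel' β α) {b b' : β} {a a' : α}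
    (h : rstar (rcomp f g) b b') (hab : f a b) (hg : g b' a') :
    rstar (rcomp g f) a a' := by
  revert a' hg
  induction h with
  | refl =>
      intro a' hg
      exact Relation.ReflTransGen.single ⟨b, hab, hg⟩
  | tail _ step ih =>
      obtain ⟨x, hgx, hfx⟩ := step
      intro a' hg
      exact (ih hgx).tail ⟨_, hfx, hg⟩

lemma star_decomp {α β : Type} (f : Rel' α β) (g : Rel' β α) (a a' : α) :
    rstar (rcomp g f) a a' ↔
      a = a' ∨ ∃ b b', f a b ∧ rstar (rcomp f g) b b' ∧ g b' a' := by
  constructor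
  · intro h
    induction h with
    | refl => exact Or.inl rfl
    | tail _ step ih =>
        obtain ⟨b', hfb', hgb'⟩ := step
        rcases ih with rfl | ⟨b, b'', hf, hs, hg⟩
        · exact Or.inr ⟨b', b', hfb', Relation.ReflTransGen.refl, hgb'⟩
        · exact Or.inr ⟨b, b', hf, hs.tail ⟨_, hg, hfb'⟩, hgb'⟩
  · rintro (rfl | ⟨b, b', hf, hs, hg⟩)
    · exact Relation.ReflTransGen.refl
    · exact star_glue f g hs hf hg

/-- Composition in Int(Rel) via the trace equals the star formula. -/
theorem trace_eq_star (Ap Am Bp Bm Cp Cm : Type)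
    (R : Rel' (Ap ⊕ Bm) (Bp ⊕ Am)) (S : Rel' (Bp ⊕ Cm) (Cp ⊕ Bm)) :
    ptrace (Kmor R S) = IntComp S R := by
  funext x y
  apply propext
  rcases x with a | c' <;> rcases y with c | a' <;>
    simp only [ptrace, Kmor, IntComp]
  · -- inl a, inl c
    constructor
    · rintro (⟨b, h12, hS⟩ | ⟨u, u', ⟨b0, hR, hS11⟩, hst, b, hT, hS12⟩)
      · exact ⟨b, ⟨b, h12, Relation.ReflTransGen.refl⟩, hS⟩
      · exact ⟨b, ⟨b0, hR, star_glue (c11 S) (c22 R) hst hS11 hT⟩, hS12⟩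
    · rintro ⟨b, ⟨b0, hR, hstp⟩, hS⟩
      rcases (star_decomp (c11 S) (c22 R) b0 b).1 hstp with
        rfl | ⟨u, u', hS11, hst, hT⟩
      · exact Or.inl ⟨b0, hR, hS⟩
      · exact Or.inr ⟨u, u', ⟨b0, hR, hS11⟩, hst, b, hT, hS⟩
  · -- inl a, inr a'
    constructor
    · rintro (h | ⟨u, u', ⟨b0, hR, hS11⟩, hst, hR21⟩)
      · exact Or.inl h
      rcases (star_decomp (c22 R) (c11 S) u u').1 hst with
        rfl | ⟨p, p', hT, hstp, hS11'⟩
      · exact Or.inr ⟨u, ⟨b0, ⟨b0, hR, Relation.ReflTransGen.refl⟩, hS11⟩, hR21⟩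
      · exact Or.inr ⟨u', ⟨p', ⟨b0, hR, Relation.ReflTransGen.head ⟨u, hS11, hT⟩ hstp⟩,
          hS11'⟩, hR21⟩
    · rintro (h | ⟨b1, ⟨b2, ⟨b0, hR, hstp⟩, hS11⟩, hR21⟩)
      · exact Or.inl h
      rcases (star_decomp (c11 S) (c22 R) b0 b2).1 hstp with
        rfl | ⟨u, u', hS11', hst, hT⟩
      · exact Or.inr ⟨b1, b1, ⟨b0, hR, hS11⟩, Relation.ReflTransGen.refl, hR21⟩
      · exact Or.inr ⟨u, b1, ⟨b0, hR, hS11'⟩, hst.tail ⟨b2, hT, hS11⟩, hR21⟩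
  · -- inr c', inl c
    constructor
    · rintro (h | ⟨u, u', hS21, hst, b, hT, hS12⟩)
      · exact Or.inl h
      · exact Or.inr ⟨b, ⟨u', ⟨u, hS21, hst⟩, hT⟩, hS12⟩
    · rintro (h | ⟨b, ⟨u', ⟨u, hS21, hst⟩, hT⟩, hS12⟩)
      · exact Or.inl h
      · exact Or.inr ⟨u, u', hS21, hst, b, hT, hS12⟩
  · -- inr c', inr a'
    constructor
    · rintro (h | ⟨u, u', hS21, hst, hR21⟩)
      · exact h.elim
      · exact ⟨u', ⟨u, hS21, hst⟩, hR21⟩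
    · rintro ⟨u', ⟨u, hS21, hst⟩, hR21⟩
      exact Or.inr ⟨u, u', hS21, hst, hR21⟩

end IntRel
end

section
/- Associativity of Int(Rel) composition: for all Int(Rel) morphisms R : (A⁺,A⁻)→(B⁺,B⁻), S : (B⁺,B⁻)→(C⁺,C⁻), and T : (C⁺,C⁻)→(D⁺,D⁻), one has T∘(S∘R) = (T∘S)∘R, where ∘ is the Int(Rel) composition given by the star formula. -/
namespace IntRel

variable {Ap Am Bp Bm Cp Cm Dp Dm : Type}

/-!
Call `exec direct enter loop exit` the relation "take a `direct` edge, or enter the graph `loop`,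
walk in it, and leave". The star formula says that `S ∘ R` is such a relation, the graph being the
bipartite graph on the wires `B⁺ ⊕ B⁻` with edges `S₁₁ : B⁺ → B⁻` and `R₂₂ : B⁻ → B⁺`.

For three morphisms, put all wires of `B` and of `C` into one network. Hiding the `B`-wires first
turns paths through the network into the description of `T ∘ (S ∘ R)`; hiding the `C`-wires first
gives `(T ∘ S) ∘ R`. Both agree with the paths through the whole network by the block formula for
the reflexive–transitive closure of a relation on `σ ⊕ τ`: between points of `τ`, a path is a
sequence of direct `τ`-steps and of excursions through `σ` (a Schur complement).
-/

section Blocks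

variable {X Y U σ τ α β γ δ : Type}

def fromBlocks (f₁₁ : Rel' α γ) (f₁₂ : Rel' α δ) (f₂₁ : Rel' β γ) (f₂₂ : Rel' β δ) :
    Rel' (α ⊕ β) (γ ⊕ δ)
  | .inl a, .inl c => f₁₁ a c
  | .inl a, .inr d => f₁₂ a d
  | .inr b, .inl c => f₂₁ b c
  | .inr b, .inr d => f₂₂ b d

def exec (direct : Rel' X Y) (enter : Rel' X U) (loop : Rel' U U) (exit : Rel' U Y) :
    Rel' X Y :=
  fun x y => direct x y ∨ ∃ u v, enter x u ∧ rstar loop u v ∧ exit v y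

variable {A : Rel' σ σ} {B : Rel' σ τ} {C : Rel' τ σ} {D : Rel' τ τ}

theorem rstar_fromBlocks_inl_inl_of_rstar {u v : σ} (h : rstar A u v) :
    rstar (fromBlocks A B C D) (.inl u) (.inl v) :=
  Relation.ReflTransGen.lift Sum.inl (fun _ _ h => h) _ _ h

theorem rstar_fromBlocks_inr_inr_of_rstar {y y' : τ} (h : rstar (exec D C A B) y y') :
    rstar (fromBlocks A B C D) (.inr y) (.inr y') := by
  induction h with
  | refl => exact .refl
  | tail _ hstep ih =>
    rcases hstep with hD | ⟨u, v, hC, hA, hB⟩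
    · exact ih.tail hD
    · exact ih.trans (((Relation.ReflTransGen.single hC).trans
        (rstar_fromBlocks_inl_inl_of_rstar hA)).tail hB)

theorem exists_of_rstar_fromBlocks_inr {y : τ} {z : σ ⊕ τ}
    (h : rstar (fromBlocks A B C D) (.inr y) z) :
    ∃ y', rstar (exec D C A B) y y' ∧
      (z = .inr y' ∨ ∃ u v, C y' u ∧ rstar A u v ∧ z = .inl v) := by
  induction h with
  | refl => exact ⟨y, .refl, .inl rfl⟩
  | @tail z₁ z _ hstep ih =>
    obtain ⟨y', hy', rfl | ⟨u, v, hC, hA, rfl⟩⟩ := ih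
    · rcases z with u | y''
      · exact ⟨y', hy', .inr ⟨u, u, hstep, .refl, rfl⟩⟩
      · exact ⟨y'', hy'.tail (.inl hstep), .inl rfl⟩
    · rcases z with v' | y''
      · exact ⟨y', hy', .inr ⟨u, v', hC, hA.tail hstep, rfl⟩⟩
      · exact ⟨y'', hy'.tail (.inr ⟨u, v, hC, hA, hstep⟩), .inl rfl⟩

theorem exists_of_rstar_fromBlocks_inl {u : σ} {z : σ ⊕ τ}
    (h : rstar (fromBlocks A B C D) (.inl u) z) :
    (∃ v, rstar A u v ∧ z = .inl v) ∨
      ∃ v y, rstar A u v ∧ B v y ∧ rstar (fromBlocks A B C D) (.inr y) z := by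
  induction h with
  | refl => exact .inl ⟨u, .refl, rfl⟩
  | @tail z₁ z _ hstep ih =>
    rcases ih with ⟨v, hA, rfl⟩ | ⟨v, y, hA, hB, hW⟩
    · rcases z with v' | y
      · exact .inl ⟨v', hA.tail hstep, rfl⟩
      · exact .inr ⟨v, y, hA, hstep, .refl⟩
    · exact .inr ⟨v, y, hA, hB, hW.tail hstep⟩

variable {u v : σ} {y y' : τ}

theorem rstar_fromBlocks_inr_inr :
    rstar (fromBlocks A B C D) (.inr y) (.inr y') ↔ rstar (exec D C A B) y y' := by
  refine ⟨fun h => ?_, rstar_fromBlocks_inr_inr_of_rstar⟩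
  obtain ⟨y'', hS, hy | ⟨_, _, _, _, ⟨⟩⟩⟩ := exists_of_rstar_fromBlocks_inr h
  cases hy
  exact hS

theorem rstar_fromBlocks_inr_inl :
    rstar (fromBlocks A B C D) (.inr y) (.inl u) ↔
      ∃ y' v, rstar (exec D C A B) y y' ∧ C y' v ∧ rstar A v u := by
  refine ⟨fun h => ?_, fun ⟨y', v, hS, hC, hA⟩ => ?_⟩
  · obtain ⟨y', hS, hu | ⟨v, _, hC, hA, hu⟩⟩ := exists_of_rstar_fromBlocks_inr h <;> cases hu
    exact ⟨y', v, hS, hC, hA⟩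
  · have hC : fromBlocks A B C D (.inr y') (.inl v) := hC
    exact (rstar_fromBlocks_inr_inr_of_rstar hS).trans
      (.head hC (rstar_fromBlocks_inl_inl_of_rstar hA))

theorem rstar_fromBlocks_inl_inr :
    rstar (fromBlocks A B C D) (.inl u) (.inr y) ↔
      ∃ v y', rstar A u v ∧ B v y' ∧ rstar (exec D C A B) y' y := by
  refine ⟨fun h => ?_, fun ⟨v, y', hA, hB, hS⟩ => ?_⟩
  · obtain ⟨_, _, ⟨⟩⟩ | ⟨v, y', hA, hB, hW⟩ := exists_of_rstar_fromBlocks_inl h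
    exact ⟨v, y', hA, hB, rstar_fromBlocks_inr_inr.1 hW⟩
  · have hB : fromBlocks A B C D (.inl v) (.inr y') := hB
    exact (rstar_fromBlocks_inl_inl_of_rstar hA).trans
      (.head hB (rstar_fromBlocks_inr_inr_of_rstar hS))

theorem rstar_fromBlocks_inl_inl :
    rstar (fromBlocks A B C D) (.inl u) (.inl v) ↔ rstar A u v ∨
      ∃ u' y y' v', rstar A u u' ∧ B u' y ∧ rstar (exec D C A B) y y' ∧ C y' v' ∧
        rstar A v' v := by
  refine ⟨fun h => ?_, ?_⟩
  · obtain ⟨_, hA, ⟨⟩⟩ | ⟨u', y, hA, hB, hW⟩ := exists_of_rstar_fromBlocks_inl h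
    · exact .inl hA
    · obtain ⟨y', v', hS, hC, hA'⟩ := rstar_fromBlocks_inr_inl.1 hW
      exact .inr ⟨u', y, y', v', hA, hB, hS, hC, hA'⟩
  · rintro (hA | ⟨u', y, y', v', hA, hB, hS, hC, hA'⟩)
    · exact rstar_fromBlocks_inl_inl_of_rstar hA
    · have hB : fromBlocks A B C D (.inl u') (.inr y) := hB
      exact (rstar_fromBlocks_inl_inl_of_rstar hA).trans
        (.head hB (rstar_fromBlocks_inr_inl.2 ⟨y', v', hS, hC, hA'⟩))

theorem exec_fromBlocks (d : Rel' X Y) (e : Rel' X (σ ⊕ τ)) (o : Rel' (σ ⊕ τ) Y) :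
    exec d e (fromBlocks A B C D) o =
      exec (exec d (fun x u => e x (.inl u)) A (fun u z => o (.inl u) z))
        (exec (fun x y => e x (.inr y)) (fun x u => e x (.inl u)) A B)
        (exec D C A B)
        (exec (fun y z => o (.inr y) z) C A (fun u z => o (.inl u) z)) := by
  funext x z
  apply propext
  constructor
  · rintro (hd | ⟨u | y, v | y', he, hW, ho⟩)
    · exact .inl (.inl hd)
    · rcases rstar_fromBlocks_inl_inl.1 hW with hA | ⟨u', y, y', v', hA, hB, hS, hC, hA'⟩
      · exact .inl (.inr ⟨u, v, he, hA, ho⟩)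
      · exact .inr ⟨y, y', .inr ⟨u, u', he, hA, hB⟩, hS, .inr ⟨v', v, hC, hA', ho⟩⟩
    · obtain ⟨v, y, hA, hB, hS⟩ := rstar_fromBlocks_inl_inr.1 hW
      exact .inr ⟨y, y', .inr ⟨u, v, he, hA, hB⟩, hS, .inl ho⟩
    · obtain ⟨y', v', hS, hC, hA⟩ := rstar_fromBlocks_inr_inl.1 hW
      exact .inr ⟨y, y', .inl he, hS, .inr ⟨v', v, hC, hA, ho⟩⟩
    · exact .inr ⟨y, y', .inl he, rstar_fromBlocks_inr_inr.1 hW, .inl ho⟩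
  · rintro ((hd | ⟨u, v, he, hA, ho⟩) | ⟨y, y', hE, hS, hO⟩)
    · exact .inl hd
    · exact .inr ⟨.inl u, .inl v, he, rstar_fromBlocks_inl_inl.2 (.inl hA), ho⟩
    · rcases hE with he | ⟨u, u', he, hA, hB⟩ <;> rcases hO with ho | ⟨v', v, hC, hA', ho⟩
      · exact .inr ⟨.inr y, .inr y', he, rstar_fromBlocks_inr_inr.2 hS, ho⟩
      · exact .inr ⟨.inr y, .inl v, he, rstar_fromBlocks_inr_inl.2 ⟨y', v', hS, hC, hA'⟩, ho⟩
      · exact .inr ⟨.inl u, .inr y', he, rstar_fromBlocks_inl_inr.2 ⟨u', y, hA, hB, hS⟩, ho⟩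
      · exact .inr ⟨.inl u, .inl v, he,
          rstar_fromBlocks_inl_inl.2 (.inr ⟨u', y, y', v', hA, hB, hS, hC, hA'⟩), ho⟩

theorem fromBlocks_swap (p q : σ ⊕ τ) :
    fromBlocks D C B A p.swap q.swap = fromBlocks A B C D p q := by
  cases p <;> cases q <;> rfl

theorem rstar_fromBlocks_swap {p q : σ ⊕ τ} :
    rstar (fromBlocks D C B A) p.swap q.swap ↔ rstar (fromBlocks A B C D) p q := by
  constructor
  · intro h
    simpa [Function.onFun, rstar] using Relation.ReflTransGen.lift Sum.swap
      (fun p q h => (fromBlocks_swap p q).mpr h) _ _ h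
  · exact Relation.ReflTransGen.lift Sum.swap (fun p q h => (fromBlocks_swap p q).mpr h) _ _

theorem exec_fromBlocks_swap (d : Rel' X Y) (e : Rel' X (σ ⊕ τ)) (o : Rel' (σ ⊕ τ) Y) :
    exec d e (fromBlocks A B C D) o =
      exec d (fun x p => e x p.swap) (fromBlocks D C B A) (fun p z => o p.swap z) := by
  funext x z
  refine propext (or_congr_right ⟨?_, ?_⟩)
  · rintro ⟨p, q, he, hW, ho⟩
    exact ⟨p.swap, q.swap, by simpa using he, rstar_fromBlocks_swap.2 hW, by simpa using ho⟩
  · rintro ⟨p, q, he, hW, ho⟩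
    rw [← p.swap_swap, ← q.swap_swap, rstar_fromBlocks_swap] at hW
    exact ⟨p.swap, q.swap, he, hW, ho⟩

variable {p : Rel' α β} {q : Rel' β α} {a a' : α} {b b' : β}

theorem rstar_bot_iff : rstar (⊥ : Rel' α α) a a' ↔ a = a' :=
  (Relation.reflTransGen_iff_eq fun _ h => h).trans eq_comm

theorem exec_bot_bot : exec (⊥ : Rel' β β) q ⊥ p = rcomp p q := by
  funext b b'
  simp [exec, rcomp, rstar_bot_iff]

theorem rstar_fromBlocks_bot_bot_inr_inr :
    rstar (fromBlocks ⊥ p q ⊥) (.inr b) (.inr b') ↔ rstar (rcomp p q) b b' := by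
  rw [rstar_fromBlocks_inr_inr, exec_bot_bot]

theorem rstar_fromBlocks_bot_bot_inr_inl :
    rstar (fromBlocks ⊥ p q ⊥) (.inr b) (.inl a) ↔ ∃ b', rstar (rcomp p q) b b' ∧ q b' a := by
  simp [rstar_fromBlocks_inr_inl, exec_bot_bot, rstar_bot_iff]

theorem rstar_fromBlocks_bot_bot_inl_inl :
    rstar (fromBlocks ⊥ p q ⊥) (.inl a) (.inl a') ↔ rstar (rcomp q p) a a' :=
  rstar_fromBlocks_swap.symm.trans rstar_fromBlocks_bot_bot_inr_inr

theorem rstar_fromBlocks_bot_bot_inl_inr :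
    rstar (fromBlocks ⊥ p q ⊥) (.inl a) (.inr b) ↔ ∃ a', rstar (rcomp q p) a a' ∧ p a' b :=
  rstar_fromBlocks_swap.symm.trans rstar_fromBlocks_bot_bot_inr_inl

end Blocks

theorem intComp_eq_exec (S : Rel' (Bp ⊕ Cm) (Cp ⊕ Bm)) (R : Rel' (Ap ⊕ Bm) (Bp ⊕ Am)) :
    IntComp S R = exec (fromBlocks ⊥ (c11 R) (c22 S) ⊥) (fromBlocks (c12 R) ⊥ ⊥ (c21 S))
      (fromBlocks ⊥ (c11 S) (c22 R) ⊥) (fromBlocks (c12 S) ⊥ ⊥ (c21 R)) := by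
  funext x y
  cases x <;> cases y <;>
    simp only [IntComp, exec, fromBlocks, rcomp, Sum.exists, rstar_fromBlocks_bot_bot_inl_inl,
      rstar_fromBlocks_bot_bot_inl_inr, rstar_fromBlocks_bot_bot_inr_inl,
      rstar_fromBlocks_bot_bot_inr_inr] <;> aesop

section Network

variable (R : Rel' (Ap ⊕ Bm) (Bp ⊕ Am)) (S : Rel' (Bp ⊕ Cm) (Cp ⊕ Bm))
  (T : Rel' (Cp ⊕ Dm) (Dp ⊕ Cm))

def network : Rel' ((Bp ⊕ Bm) ⊕ (Cp ⊕ Cm)) ((Bp ⊕ Bm) ⊕ (Cp ⊕ Cm)) :=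
  fromBlocks (fromBlocks ⊥ (c11 S) (c22 R) ⊥) (fromBlocks (c12 S) ⊥ ⊥ ⊥)
    (fromBlocks ⊥ ⊥ ⊥ (c21 S)) (fromBlocks ⊥ (c11 T) (c22 S) ⊥)

def networkEnter : Rel' (Ap ⊕ Dm) ((Bp ⊕ Bm) ⊕ (Cp ⊕ Cm))
  | .inl a, .inl (.inl b) => c12 R a b
  | .inr d, .inr (.inr c) => c21 T d c
  | _, _ => False

def networkExit : Rel' ((Bp ⊕ Bm) ⊕ (Cp ⊕ Cm)) (Dp ⊕ Am)
  | .inr (.inl c), .inl d => c12 T c d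
  | .inl (.inr b), .inr a => c21 R b a
  | _, _ => False

theorem intComp_intComp_eq_exec_network :
    IntComp T (IntComp S R) = exec (fromBlocks ⊥ (c11 R) (c22 T) ⊥) (networkEnter R T)
      (network R S T) (networkExit R T) := by
  rw [intComp_eq_exec T, network]
  conv_rhs => rw [exec_fromBlocks]
  congr 1 <;> funext x y <;> cases x <;> cases y <;>
    simp [intComp_eq_exec S R, exec, fromBlocks, networkEnter, networkExit, c11, c12, c21, c22,
      Sum.exists]

theorem intComp_intComp_eq_exec_network' :
    IntComp (IntComp T S) R = exec (fromBlocks ⊥ (c11 R) (c22 T) ⊥) (networkEnter R T)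
      (network R S T) (networkExit R T) := by
  rw [intComp_eq_exec (IntComp T S), network]
  -- `exec_fromBlocks` hides the left summand; swapping first hides the `C`-wires instead.
  conv_rhs => rw [exec_fromBlocks_swap, exec_fromBlocks]
  congr 1 <;> funext x y <;> cases x <;> cases y <;>
    simp [intComp_eq_exec T S, exec, fromBlocks, networkEnter, networkExit, c11, c12, c21, c22,
      Sum.exists]

end Network

/-- Associativity of Int(Rel) composition. -/
theorem intComp_assoc (Ap Am Bp Bm Cp Cm Dp Dm : Type)
    (R : Rel' (Ap ⊕ Bm) (Bp ⊕ Am)) (S : Rel' (Bp ⊕ Cm) (Cp ⊕ Bm))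
    (T : Rel' (Cp ⊕ Dm) (Dp ⊕ Cm)) :
    IntComp T (IntComp S R) = IntComp (IntComp T S) R := by
  rw [intComp_intComp_eq_exec_network, intComp_intComp_eq_exec_network']

end IntRel
end

section
/- Strong uniformity of the particle trace in Rel over points: let U, X₁, X₂, Y₁, Y₂ be sets and let 1 = {⋆} be a singleton. Let f : X₂⊕U → Y₂⊕U, g : X₁⊕1 → Y₁⊕1, a : X₁→X₂, b : Y₁→Y₂ be relations, and let p : 1→U be any relation (a point). If f∘(a⊕p) = (b⊕p)∘g as relations X₁⊕1 → Y₂⊕U, then Tr(f)∘a = b∘Tr(g), where Tr(f) is the particle-style trace of f over U and Tr(g) is the particle-style trace of g over 1. -/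
namespace IntRel

variable {Ap Am Bp Bm Cp Cm Dp Dm : Type}

/-- Strong uniformity of the particle trace in Rel over points. -/
theorem strong_uniformity (U X1 X2 Y1 Y2 : Type)
    (f : Rel' (X2 ⊕ U) (Y2 ⊕ U)) (g : Rel' (X1 ⊕ Unit) (Y1 ⊕ Unit))
    (a : Rel' X1 X2) (b : Rel' Y1 Y2) (p : Rel' Unit U)
    (h : rcomp f (sumRel a p) = rcomp (sumRel b p) g) :
    rcomp (ptrace f) a = rcomp b (ptrace g) := by
  have H : ∀ s t, rcomp f (sumRel a p) s t ↔ rcomp (sumRel b p) g s t :=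
    fun s t => iff_of_eq (congrFun (congrFun h s) t)
  have key : ∀ u u', p () u →
      Relation.ReflTransGen (fun a b => f (.inr a) (.inr b)) u u' → p () u' := by
    intro u u' hp hc
    induction hc with
    | refl => exact hp
    | tail _ hstep ih =>
      obtain ⟨w, hg, hbp⟩ := (H (.inr ()) (.inr _)).mp ⟨.inr _, ih, hstep⟩
      cases w with
      | inl y1 => exact absurd hbp (by simp [sumRel])
      | inr u0 => exact hbp
  funext x y
  apply propext
  constructor
  · rintro ⟨x2, hax, htr⟩
    rcases htr with hxy | ⟨u, u', hxu, hch, huy⟩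
    · obtain ⟨w, hg, hbp⟩ := (H (.inl x) (.inl y)).mp ⟨.inl x2, hax, hxy⟩
      cases w with
      | inl y1 => exact ⟨y1, Or.inl hg, hbp⟩
      | inr u0 => exact absurd hbp (by simp [sumRel])
    · obtain ⟨w, hg, hbp⟩ := (H (.inl x) (.inr u)).mp ⟨.inl x2, hax, hxu⟩
      cases w with
      | inl y1 => exact absurd hbp (by simp [sumRel])
      | inr u0 =>
        have hpu' : p () u' := key u u' hbp hch
        obtain ⟨w2, hg2, hbp2⟩ := (H (.inr ()) (.inl y)).mp ⟨.inr u', hpu', huy⟩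
        cases w2 with
        | inl y1 =>
          exact ⟨y1, Or.inr ⟨(), (), hg, Relation.ReflTransGen.refl, hg2⟩, hbp2⟩
        | inr u1 => exact absurd hbp2 (by simp [sumRel])
  · rintro ⟨y1, htr, hby⟩
    rcases htr with hxy | ⟨u, u', hxu, hch, huy⟩
    · obtain ⟨w, hs, hf⟩ := (H (.inl x) (.inl y)).mpr ⟨.inl y1, hxy, hby⟩
      cases w with
      | inl x2 => exact ⟨x2, hs, Or.inl hf⟩
      | inr u0 => exact absurd hs (by simp [sumRel])
    · obtain ⟨w2, hs2, hf2⟩ := (H (.inr ()) (.inl y)).mpr ⟨.inl y1, huy, hby⟩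
      cases w2 with
      | inl x2 => exact absurd hs2 (by simp [sumRel])
      | inr u0 =>
        obtain ⟨w, hs, hf⟩ := (H (.inl x) (.inr u0)).mpr ⟨.inr (), hxu, hs2⟩
        cases w with
        | inl x2 =>
          exact ⟨x2, hs, Or.inr ⟨u0, u0, hf, Relation.ReflTransGen.refl, hf2⟩⟩
        | inr u1 => exact absurd hs (by simp [sumRel])


end IntRel
end

section
/- Invariance of the particle trace in Rel under retraction conjugation: let s : A→B and t : B→A be relations with t∘s = id_A. Then for every relation f : X⊕A → Y⊕A, the particle-style trace of f over A equals the particle-style trace over B of the conjugate (id_Y⊕s)∘f∘(id_X⊕t) : X⊕B → Y⊕B. (This yields both invariance equations of the paper: taking s = j_m, t = k_m with k_m∘j_m = id recovers Tr over U^m of f equals Tr over U of the (k_m,j_m)-conjugate, and taking s = r_p, t = !_p with !_p∘r_p = id_U recovers Tr over U of g equals Tr over U⊕1^m of the (!_p,r_p)-conjugate.) -/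
namespace IntRel

variable {Ap Am Bp Bm Cp Cm Dp Dm : Type}

/-- Invariance of the particle trace in Rel under retraction conjugation:
if `t ∘ s = id_A` then the trace over `A` of `f` equals the trace over `B` of the
conjugate `(id_Y ⊕ s) ∘ f ∘ (id_X ⊕ t)`. -/
theorem trace_conjugation_invariance (A B X Y : Type)
    (s : Rel' A B) (t : Rel' B A) (hst : rcomp t s = idRel A)
    (f : Rel' (X ⊕ A) (Y ⊕ A)) :
    ptrace f = ptrace (rcomp (sumRel (idRel Y) s) (rcomp f (sumRel (idRel X) t))) := by
  set g := rcomp (sumRel (idRel Y) s) (rcomp f (sumRel (idRel X) t)) with hg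
  have hunit : ∀ a : A, ∃ b, s a b ∧ t b a := by
    intro a
    have := congrFun (congrFun hst a) a
    simp only [rcomp, idRel] at this
    exact this.mpr trivial
  have hcounit : ∀ a a' b, s a b → t b a' → a = a' := by
    intro a a' b hs ht
    have := congrFun (congrFun hst a) a'
    simp only [rcomp, idRel] at this
    exact this.mp ⟨b, hs, ht⟩
  have hgXY : ∀ x y, g (.inl x) (.inl y) ↔ f (.inl x) (.inl y) := by
    intro x y
    constructor
    · rintro ⟨w, ⟨z, hz, hf⟩, hw⟩
      cases z <;> cases w <;> simp [sumRel, idRel] at hz hw <;> subst hz <;> subst hw <;>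
        first | exact hf | exact absurd hw (by simp [sumRel])
    · intro h
      exact ⟨.inl y, ⟨.inl x, rfl, h⟩, rfl⟩
  have hgXB : ∀ x b, g (.inl x) (.inr b) ↔ ∃ a, f (.inl x) (.inr a) ∧ s a b := by
    intro x b
    constructor
    · rintro ⟨w, ⟨z, hz, hf⟩, hw⟩
      cases z <;> cases w <;> simp [sumRel, idRel] at hz hw
      subst hz; exact ⟨_, hf, hw⟩
    · rintro ⟨a, hf, hs⟩
      exact ⟨.inr a, ⟨.inl x, rfl, hf⟩, hs⟩
  have hgBY : ∀ b y, g (.inr b) (.inl y) ↔ ∃ a, t b a ∧ f (.inr a) (.inl y) := by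
    intro b y
    constructor
    · rintro ⟨w, ⟨z, hz, hf⟩, hw⟩
      cases z <;> cases w <;> simp [sumRel, idRel] at hz hw
      subst hw; exact ⟨_, hz, hf⟩
    · rintro ⟨a, ht, hf⟩
      exact ⟨.inl y, ⟨.inr a, ht, hf⟩, rfl⟩
  have hgBB : ∀ b b', g (.inr b) (.inr b') ↔
      ∃ a a', t b a ∧ f (.inr a) (.inr a') ∧ s a' b' := by
    intro b b'
    constructor
    · rintro ⟨w, ⟨z, hz, hf⟩, hw⟩
      cases z <;> cases w <;> simp [sumRel, idRel] at hz hw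
      exact ⟨_, _, hz, hf, hw⟩
    · rintro ⟨a, a', ht, hf, hs⟩
      exact ⟨.inr a', ⟨.inr a, ht, hf⟩, hs⟩
  funext x y
  simp only [ptrace, eq_iff_iff]
  constructor
  · rintro (h | ⟨u, u', hxu, hchain, huy⟩)
    · exact Or.inl ((hgXY x y).mpr h)
    · -- transport the chain from A to B
      obtain ⟨b, hsb, htb⟩ := hunit u
      have key : ∀ v, Relation.ReflTransGen (fun a b => f (.inr a) (.inr b)) u v →
          ∃ b', s v b' ∧ t b' v ∧
            Relation.ReflTransGen (fun p q => g (.inr p) (.inr q)) b b' := by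
        intro v hv
        induction hv with
        | refl => exact ⟨b, hsb, htb, Relation.ReflTransGen.refl⟩
        | tail hwv hstep ih =>
          obtain ⟨b'', hs'', ht'', hrt⟩ := ih
          obtain ⟨b', hsb', htb'⟩ := hunit _
          exact ⟨b', hsb', htb',
            hrt.tail ((hgBB _ _).mpr ⟨_, _, ht'', hstep, hsb'⟩)⟩
      obtain ⟨b', hsb', htb', hrt⟩ := key u' hchain
      exact Or.inr ⟨b, b', (hgXB x b).mpr ⟨u, hxu, hsb⟩, hrt,
        (hgBY b' y).mpr ⟨u', htb', huy⟩⟩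
  · rintro (h | ⟨b, b', hxb, hchain, hby⟩)
    · exact Or.inl ((hgXY x y).mp h)
    · obtain ⟨a, hxa, hsa⟩ := (hgXB x b).mp hxb
      have key : ∀ c, Relation.ReflTransGen (fun p q => g (.inr p) (.inr q)) b c →
          ∃ a'', s a'' c ∧
            Relation.ReflTransGen (fun p q => f (.inr p) (.inr q)) a a'' := by
        intro c hc
        induction hc with
        | refl => exact ⟨a, hsa, Relation.ReflTransGen.refl⟩
        | tail hbc hstep ih =>
          obtain ⟨a'', hs'', hrt⟩ := ih
          obtain ⟨a₁, a₂, ht₁, hf₁, hs₂⟩ := (hgBB _ _).mp hstep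
          have : a'' = a₁ := hcounit _ _ _ hs'' ht₁
          subst this
          exact ⟨a₂, hs₂, hrt.tail hf₁⟩
      obtain ⟨a'', hs'', hrt⟩ := key b' hchain
      obtain ⟨a', ht', hf'⟩ := (hgBY b' y).mp hby
      have : a'' = a' := hcounit _ _ _ hs'' ht'
      subst this
      exact Or.inr ⟨a, a'', hxa, hrt, hf'⟩

end IntRel
end
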